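/- Let h : ℝ → ℝ be 12 times continuously differentiable on [-1,1] with h^{(12)}(t) ≥ 0 for all t ∈ (-1,1), and let f be a real polynomial of degree at most 11 satisfying f(a) = h(a) and f'(a) = h'(a) for each a ∈ {-1, -1/2, 0, 1/2}, and f(b) = h(b) for each b ∈ {-1/3, -1/6, 1/6, 1/3}. Then f(t) ≤ h(t) for every t ∈ [-1,1] \ T₁, where T₁ = (-1/3,-1/6) ∪ (1/6,1/3). -/

import Mathlib

/-!
If `t` is a node both sides agree. Otherwise let `w` be the monic node polynomial, with the four
double nodes counted twice, and choose `c` so that `q = f + c w` also interpolates `h` at `t`.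
Then `h - q` has thirteen zeros on `[-1, 1]` counted with multiplicity, so twelve applications of
Rolle's theorem give `ξ ∈ (-1, 1)` with `h⁽¹²⁾(ξ) = q⁽¹²⁾ = 12! c`. Hence `c ≥ 0`, and as `w ≥ 0`
off `T₁`, `h(t) - f(t) = c w(t) ≥ 0`.
-/

/-- The avoiding set `T₁ = (-1/3,-1/6) ∪ (1/6,1/3)`. -/
def T1 : Set ℝ := Set.Ioo (-1/3) (-1/6) ∪ Set.Ioo (1/6) (1/3)

open Polynomial Set

section Rolle

variable {g g' : ℝ → ℝ} {l r : ℝ}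

theorem exists_finset_deriv_eq_zero_of_eq_zero_on_finset
    (hc : ContinuousOn g (Icc l r)) (hd : ∀ x ∈ Ioo l r, HasDerivAt g (g' x) x)
    {s : Finset ℝ} (hs : ↑s ⊆ Icc l r) (hz : ∀ x ∈ s, g x = 0) :
    ∃ t : Finset ℝ, s.card ≤ t.card + 1 ∧ ↑t ⊆ Ioo l r ∧ Disjoint s t ∧ ∀ x ∈ t, g' x = 0 := by
  -- Keeping every new point below some point of `s` keeps the next Rolle point out of `t`.
  suffices ∃ t : Finset ℝ, s.card ≤ t.card + 1 ∧ ↑t ⊆ Ioo l r ∧ Disjoint s t ∧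
      (∀ x ∈ t, g' x = 0) ∧ ∀ x ∈ t, ∃ y ∈ s, x < y by
    obtain ⟨t, hcard, ht, hdisj, htz, -⟩ := this
    exact ⟨t, hcard, ht, hdisj, htz⟩
  induction s using Finset.induction_on_max with
  | empty => exact ⟨∅, by simp⟩
  | insert a s hlt ih =>
    have ha : a ∈ Icc l r := hs (by simp)
    obtain ⟨t, hcard, ht, hdisj, htz, hbelow⟩ :=
      ih ((Finset.coe_subset.2 (Finset.subset_insert a s)).trans hs)
        fun x hx => hz x (Finset.mem_insert_of_mem hx)
    rcases s.eq_empty_or_nonempty with rfl | hne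
    · exact ⟨∅, by simp⟩
    set m := s.max' hne
    have hms : m ∈ s := s.max'_mem hne
    have hm : m ∈ Icc l r := hs (by simp [hms])
    obtain ⟨ξ, hξ, hξz⟩ := exists_hasDerivAt_eq_zero (hlt m hms)
      (hc.mono (Icc_subset_Icc hm.1 ha.2)) (by rw [hz m (by simp [hms]), hz a (by simp)])
      fun x hx => hd x ⟨hm.1.trans_lt hx.1, hx.2.trans_le ha.2⟩
    have hsξ : ∀ y ∈ s, y < ξ := fun y hy => (s.le_max' y hy).trans_lt hξ.1
    have hta : ∀ x ∈ t, x < a := fun x hx =>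
      let ⟨y, hy, hxy⟩ := hbelow x hx; hxy.trans (hlt y hy)
    have hξt : ξ ∉ t := fun hξt =>
      let ⟨y, hy, hξy⟩ := hbelow ξ hξt; (hsξ y hy).not_gt hξy
    refine ⟨insert ξ t, ?_, ?_, ?_, ?_, ?_⟩
    · rw [Finset.card_insert_of_notMem hξt]
      linarith [Finset.card_insert_le a s]
    · rw [Finset.coe_insert]
      exact insert_subset ⟨hm.1.trans_lt hξ.1, hξ.2.trans_le ha.2⟩ ht
    · simp only [Finset.disjoint_insert_left, Finset.disjoint_insert_right, Finset.mem_insert,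
        not_or]
      exact ⟨⟨hξ.2.ne, fun hξs => (hsξ ξ hξs).false⟩, fun hat => (hta a hat).false, hdisj⟩
    · simpa [hξz] using htz
    · simp only [Finset.mem_insert, forall_eq_or_imp]
      exact ⟨⟨a, by simp, hξ.2⟩, fun x hx => ⟨a, by simp, hta x hx⟩⟩

theorem exists_finset_iterate_deriv_eq_zero_of_eq_zero_on_finset {D : ℕ → ℝ → ℝ} (n : ℕ)
    (hc : ∀ k ≤ n, ContinuousOn (D k) (Icc l r))
    (hd : ∀ k ≤ n, ∀ x ∈ Ioo l r, HasDerivAt (D k) (D (k + 1) x) x)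
    {s : Finset ℝ} (hs : ↑s ⊆ Icc l r) (hz : ∀ x ∈ s, D 0 x = 0) :
    ∃ t : Finset ℝ, s.card ≤ t.card + (n + 1) ∧ ↑t ⊆ Ioo l r ∧ ∀ x ∈ t, D (n + 1) x = 0 := by
  induction n with
  | zero =>
    obtain ⟨t, hcard, ht, -, htz⟩ :=
      exists_finset_deriv_eq_zero_of_eq_zero_on_finset (hc 0 le_rfl) (hd 0 le_rfl) hs hz
    exact ⟨t, hcard, ht, htz⟩
  | succ n ih =>
    obtain ⟨t, hcard, ht, htz⟩ :=
      ih (fun k hk => hc k (by omega)) fun k hk => hd k (by omega)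
    obtain ⟨u, hcard', hu, -, huz⟩ := exists_finset_deriv_eq_zero_of_eq_zero_on_finset
      (hc (n + 1) le_rfl) (hd (n + 1) le_rfl) (ht.trans Ioo_subset_Icc_self) htz
    exact ⟨u, by omega, hu, huz⟩

end Rolle

section NodePoly

variable {R : Type*} [CommRing R]

theorem Polynomial.Monic.iterate_derivative_natDegree {p : R[X]} (hp : p.Monic) :
    derivative^[p.natDegree] p = C (p.natDegree.factorial : R) := by
  rw [eq_C_of_natDegree_le_zero ((natDegree_iterate_derivative p _).trans (Nat.sub_self _).le),
    coeff_iterate_derivative, zero_add, Nat.descFactorial_self, hp.coeff_natDegree, nsmul_one]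

noncomputable def hermiteNodePoly (Z₀ Z₁ : Finset R) : R[X] :=
  (∏ a ∈ Z₀, (X - C a)) * ∏ a ∈ Z₁, (X - C a)

variable {Z₀ Z₁ : Finset R} {a : R}

theorem hermiteNodePoly_monic : (hermiteNodePoly Z₀ Z₁).Monic :=
  (monic_prod_X_sub_C id Z₀).mul (monic_prod_X_sub_C id Z₁)

theorem natDegree_hermiteNodePoly [Nontrivial R] :
    (hermiteNodePoly Z₀ Z₁).natDegree = Z₀.card + Z₁.card := by
  have hmonic (Z : Finset R) : (∏ a ∈ Z, (X - C a)).Monic :=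
    monic_prod_of_monic _ _ fun b _ => monic_X_sub_C b
  rw [hermiteNodePoly, (hmonic Z₀).natDegree_mul (hmonic Z₁)]
  simp

theorem eval_hermiteNodePoly_eq_zero (ha : a ∈ Z₀) : (hermiteNodePoly Z₀ Z₁).eval a = 0 := by
  rw [hermiteNodePoly, eval_mul, eval_prod, Finset.prod_eq_zero ha (by simp), zero_mul]

theorem eval_hermiteNodePoly_ne_zero [IsDomain R] (hZ : Z₁ ⊆ Z₀) (ha : a ∉ Z₀) :
    (hermiteNodePoly Z₀ Z₁).eval a ≠ 0 := by
  have hne : ∀ b ∈ Z₀, a - b ≠ 0 := fun b hb => sub_ne_zero.2 (ne_of_mem_of_not_mem hb ha).symm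
  simp only [hermiteNodePoly, eval_mul, eval_prod, eval_sub, eval_X, eval_C]
  exact mul_ne_zero (Finset.prod_ne_zero_iff.2 hne)
    (Finset.prod_ne_zero_iff.2 fun b hb => hne b (hZ hb))

theorem eval_derivative_hermiteNodePoly_eq_zero [DecidableEq R] (hZ : Z₁ ⊆ Z₀) (ha : a ∈ Z₁) :
    (derivative (hermiteNodePoly Z₀ Z₁)).eval a = 0 := by
  have hsplit : hermiteNodePoly Z₀ Z₁ =
      (X - C a) * ((X - C a) *
        ((∏ b ∈ Z₀.erase a, (X - C b)) * ∏ b ∈ Z₁.erase a, (X - C b))) := by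
    rw [hermiteNodePoly, ← Finset.mul_prod_erase Z₀ _ (hZ ha), ← Finset.mul_prod_erase Z₁ _ ha]
    ring
  simp [hsplit, derivative_mul]

end NodePoly

section HermiteError

variable {h : ℝ → ℝ} {l r : ℝ} {n : ℕ}

theorem hasDerivAt_iteratedDerivWithin_Icc (hh : ContDiffOn ℝ n h (Icc l r)) {k : ℕ} (hk : k < n)
    {x : ℝ} (hx : x ∈ Ioo l r) :
    HasDerivAt (iteratedDerivWithin k h (Icc l r))
      (iteratedDerivWithin (k + 1) h (Icc l r) x) x := by
  rw [iteratedDerivWithin_succ]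
  exact ((hh.differentiableOn_iteratedDerivWithin (by exact_mod_cast hk)
    (uniqueDiffOn_Icc (hx.1.trans hx.2))) x (Ioo_subset_Icc_self hx)).hasDerivWithinAt.hasDerivAt
    (Icc_mem_nhds hx.1 hx.2)

theorem exists_iteratedDerivWithin_eq_of_interpolates (hlr : l < r)
    (hh : ContDiffOn ℝ n h (Icc l r)) (hn : n ≠ 0) {q : ℝ[X]} {Z₀ Z₁ : Finset ℝ}
    (hZ : Z₁ ⊆ Z₀) (hZ₀ : ↑Z₀ ⊆ Icc l r)
    (hZ₀card : 2 ≤ Z₀.card) (hcard : n + 1 ≤ Z₀.card + Z₁.card)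
    (hval : ∀ x ∈ Z₀, q.eval x = h x)
    (hder : ∀ x ∈ Z₁, (derivative q).eval x = derivWithin h (Icc l r) x) :
    ∃ ξ ∈ Ioo l r, iteratedDerivWithin n h (Icc l r) ξ = (derivative^[n] q).eval ξ := by
  set G : ℕ → ℝ → ℝ := fun k x =>
    iteratedDerivWithin k h (Icc l r) x - (derivative^[k] q).eval x
  have hGc : ∀ k ≤ n, ContinuousOn (G k) (Icc l r) := fun k hk =>
    (hh.continuousOn_iteratedDerivWithin (by exact_mod_cast hk) (uniqueDiffOn_Icc hlr)).sub
      (derivative^[k] q).continuousOn_aeval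
  have hGd : ∀ k < n, ∀ x ∈ Ioo l r, HasDerivAt (G k) (G (k + 1) x) x := fun k hk x hx => by
    refine (hasDerivAt_iteratedDerivWithin_Icc hh hk hx).sub ?_
    rw [Function.iterate_succ_apply']
    exact (derivative^[k] q).hasDerivAt x
  suffices ∃ ξ ∈ Ioo l r, G n ξ = 0 from
    let ⟨ξ, hξ, hGξ⟩ := this; ⟨ξ, hξ, sub_eq_zero.1 hGξ⟩
  obtain ⟨t₁, ht₁card, ht₁, hdisj, ht₁z⟩ := exists_finset_deriv_eq_zero_of_eq_zero_on_finset
    (hGc 0 (Nat.zero_le n)) (hGd 0 (Nat.pos_of_ne_zero hn)) hZ₀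
    fun x hx => by simp [G, hval x hx]
  obtain ⟨m, rfl⟩ := Nat.exists_eq_succ_of_ne_zero hn
  cases m with
  | zero =>
    obtain ⟨ξ, hξ⟩ := Finset.card_pos.1 (by omega : 0 < t₁.card)
    exact ⟨ξ, ht₁ hξ, ht₁z ξ hξ⟩
  | succ k =>
    have hG₁ : ∀ x ∈ t₁ ∪ Z₁, G 1 x = 0 := by
      intro x hx
      rcases Finset.mem_union.1 hx with hx | hx
      · exact ht₁z x hx
      · simp [G, hder x hx]
    obtain ⟨t, htcard, ht, htz⟩ :=
      exists_finset_iterate_deriv_eq_zero_of_eq_zero_on_finset (D := fun j => G (j + 1)) k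
        (fun j hj => hGc (j + 1) (by omega)) (fun j hj => hGd (j + 1) (by omega))
        (Finset.coe_union t₁ Z₁ ▸ union_subset (ht₁.trans Ioo_subset_Icc_self)
          ((Finset.coe_subset.2 hZ).trans hZ₀)) hG₁
    have : (t₁ ∪ Z₁).card = t₁.card + Z₁.card :=
      Finset.card_union_of_disjoint (hdisj.symm.mono_right hZ)
    obtain ⟨ξ, hξ⟩ := Finset.card_pos.1 (by omega : 0 < t.card)
    exact ⟨ξ, ht hξ, htz ξ hξ⟩

theorem exists_sub_eval_eq_iteratedDerivWithin_mul_hermiteNodePoly (hlr : l < r)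
    (hh : ContDiffOn ℝ n h (Icc l r)) {Z₀ Z₁ : Finset ℝ} (hZ : Z₁ ⊆ Z₀) (hZ₀ : ↑Z₀ ⊆ Icc l r)
    (hn : Z₀.card + Z₁.card = n) {f : ℝ[X]} (hf : f.natDegree < n)
    (hval : ∀ x ∈ Z₀, f.eval x = h x)
    (hder : ∀ x ∈ Z₁, (derivative f).eval x = derivWithin h (Icc l r) x)
    {t : ℝ} (ht : t ∈ Icc l r) :
    ∃ ξ ∈ Ioo l r, h t - f.eval t =
      iteratedDerivWithin n h (Icc l r) ξ / n.factorial * (hermiteNodePoly Z₀ Z₁).eval t := by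
  classical
  set w := hermiteNodePoly Z₀ Z₁
  by_cases htZ : t ∈ Z₀
  · refine ⟨(l + r) / 2, ⟨by linarith, by linarith⟩, ?_⟩
    rw [hval t htZ, eval_hermiteNodePoly_eq_zero htZ, sub_self, mul_zero]
  have hwt : w.eval t ≠ 0 := eval_hermiteNodePoly_ne_zero hZ htZ
  have hZ₀ne : Z₀.Nonempty := by
    rw [← Finset.card_pos]; have := Finset.card_le_card hZ; omega
  -- `q` also interpolates `h` at `t`, so `h - q` has `n + 1` zeros counted with multiplicity
  set c := (h t - f.eval t) / w.eval t
  set q := f + C c * w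
  obtain ⟨ξ, hξ, hξq⟩ := exists_iteratedDerivWithin_eq_of_interpolates (q := q) hlr hh (by omega)
    (Z₀ := insert t Z₀) (hZ.trans (Finset.subset_insert t Z₀))
    (by rw [Finset.coe_insert]; exact insert_subset ht hZ₀)
    (by rw [Finset.card_insert_of_notMem htZ]; have := hZ₀ne.card_pos; omega)
    (by rw [Finset.card_insert_of_notMem htZ]; omega)
    (by
      intro x hx
      rcases Finset.mem_insert.1 hx with rfl | hx
      · simp [q, c, hwt]
      · simpa [q, hval x hx] using Or.inr (eval_hermiteNodePoly_eq_zero hx))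
    (fun x hx => by
      simpa [q, hder x hx] using Or.inr (eval_derivative_hermiteNodePoly_eq_zero hZ hx))
  have hqn : derivative^[n] q = C (c * n.factorial) := by
    rw [iterate_map_add, iterate_derivative_eq_zero hf, iterate_derivative_C_mul, zero_add,
      ← hn, ← natDegree_hermiteNodePoly, hermiteNodePoly_monic.iterate_derivative_natDegree,
      ← C_mul]
  refine ⟨ξ, hξ, ?_⟩
  rw [hξq, hqn, eval_C, mul_div_cancel_right₀ _ (by positivity), div_mul_cancel₀ _ hwt]

end HermiteError

namespace T1

noncomputable def doubleNodes : Finset ℝ := {-1, -1/2, 0, 1/2}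

noncomputable def simpleNodes : Finset ℝ := {-1/3, -1/6, 1/6, 1/3}

theorem disjoint_doubleNodes_simpleNodes : Disjoint doubleNodes simpleNodes := by
  norm_num [doubleNodes, simpleNodes]

theorem card_nodes : (doubleNodes ∪ simpleNodes).card + doubleNodes.card = 12 := by
  rw [Finset.card_union_of_disjoint disjoint_doubleNodes_simpleNodes]
  norm_num [doubleNodes, simpleNodes]

theorem nodes_subset_Icc : ↑(doubleNodes ∪ simpleNodes) ⊆ Icc (-1 : ℝ) 1 := by
  simp only [doubleNodes, simpleNodes, Finset.coe_union, Finset.coe_insert, Finset.coe_singleton,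
    union_subset_iff, insert_subset_iff, singleton_subset_iff, mem_Icc]
  norm_num

theorem prod_simpleNodes_nonneg {t : ℝ} (ht : t ∉ T1) : 0 ≤ ∏ b ∈ simpleNodes, (t - b) := by
  have hprod : ∏ b ∈ simpleNodes, (t - b) = (9 * t ^ 2 - 1) * (36 * t ^ 2 - 1) / 324 := by
    rw [simpleNodes, Finset.prod_insert (by norm_num), Finset.prod_insert (by norm_num),
      Finset.prod_insert (by norm_num), Finset.prod_singleton]
    ring
  simp only [T1, mem_union, mem_Ioo, not_or, not_and, not_lt] at ht
  rw [hprod]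
  obtain ⟨hneg, hpos⟩ := ht
  apply div_nonneg _ (by norm_num)
  rcases le_or_gt t (-1/3) with h₁ | h₁
  · exact mul_nonneg (by nlinarith) (by nlinarith)
  rcases le_or_gt t (1/6) with h₂ | h₂
  · have := hneg h₁
    exact mul_nonneg_of_nonpos_of_nonpos (by nlinarith) (by nlinarith)
  · have := hpos h₂
    exact mul_nonneg (by nlinarith) (by nlinarith)

theorem eval_hermiteNodePoly_nonneg {t : ℝ} (ht : t ∉ T1) :
    0 ≤ (hermiteNodePoly (doubleNodes ∪ simpleNodes) doubleNodes).eval t := by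
  rw [hermiteNodePoly, Finset.prod_union disjoint_doubleNodes_simpleNodes]
  simp only [eval_mul, eval_prod, eval_sub, eval_X, eval_C]
  have := prod_simpleNodes_nonneg ht
  nlinarith [sq_nonneg (∏ a ∈ doubleNodes, (t - a))]

end T1

theorem hermite_interpolant_below_T1 (h : ℝ → ℝ)
    (hsmooth : ContDiffOn ℝ 12 h (Set.Icc (-1 : ℝ) 1))
    (h12 : ∀ t ∈ Set.Ioo (-1 : ℝ) 1,
      0 ≤ iteratedDerivWithin 12 h (Set.Icc (-1 : ℝ) 1) t)
    (f : Polynomial ℝ) (hdeg : f.natDegree ≤ 11)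
    (hdouble : ∀ a ∈ ({-1, -1/2, 0, 1/2} : Set ℝ),
      f.eval a = h a ∧
        (Polynomial.derivative f).eval a = derivWithin h (Set.Icc (-1 : ℝ) 1) a)
    (hsingle : ∀ b ∈ ({-1/3, -1/6, 1/6, 1/3} : Set ℝ), f.eval b = h b) :
    ∀ t ∈ Set.Icc (-1 : ℝ) 1 \ T1, f.eval t ≤ h t := by
  rintro t ⟨ht, htT⟩
  have hval : ∀ x ∈ T1.doubleNodes ∪ T1.simpleNodes, f.eval x = h x := by
    intro x hx
    rcases Finset.mem_union.1 hx with hx | hx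
    · exact (hdouble x (by simpa [T1.doubleNodes] using hx)).1
    · exact hsingle x (by simpa [T1.simpleNodes] using hx)
  obtain ⟨ξ, hξ, herr⟩ := exists_sub_eval_eq_iteratedDerivWithin_mul_hermiteNodePoly (n := 12)
    (by norm_num) (by exact_mod_cast hsmooth) Finset.subset_union_left T1.nodes_subset_Icc
    T1.card_nodes (by omega) hval
    (fun x hx => (hdouble x (by simpa [T1.doubleNodes] using hx)).2) ht
  rw [← sub_nonneg, herr]
  exact mul_nonneg (div_nonneg (h12 ξ hξ) (by positivity)) (T1.eval_hermiteNodePoly_nonneg htT)
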